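/- arXiv:2301.03181 — 2 statements merged into one kernel-verified Lean document; each statement's English description precedes it below -/
import Mathlib

section
/- Type C linkage at the origin, ℓ odd: let ℓ > 3 be odd, λ+ρ strictly decreasing positive integers, and suppose both μ = λ − ε_i and ν = λ + ε_i are dominant. Then μ and ν are linked under W_ℓ if and only if (λ+ρ)_i ≡ 0 (mod ℓ). -/
/-!
Every reflection generating `W_ℓ` permutes the coordinates of a weight up to sign and up to
adding multiples of `ℓ`; for the long roots `2ε_i` this needs `ℓ` odd, so that `ℓ_α = ℓ`.
Hence the multiset of the coordinates, read modulo `ℓ` and up to sign, is an invariant of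
linkage. The ρ-shifts of `λ ∓ ε_i` differ only in their `i`-th coordinates `a ∓ 1`, where
`a = (λ+ρ)_i`. If they are linked, then `a + 1 ≡ ±(a - 1) (mod ℓ)`, so `ℓ` divides `2` or `2a`,
and in either case `ℓ ∣ a` since `ℓ` is odd. Conversely, if `a = kℓ`, the reflection `s_{2ε_i,k}`
sends `a - 1` to `2kℓ - (a - 1) = a + 1`.
-/

/-- The standard basis vector `ε_i` of `ℚ^N`. -/
def eps {N : ℕ} (i : Fin N) : Fin N → ℚ := fun t => if t = i then 1 else 0

/-- The affine reflection `s_{α,k}` with root `α`, coroot `αv` and constant `c = k ℓ_α`: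
`x ↦ x − ((x, αv) − c) α`, i.e. `s_α(x) + c·α`. -/
def affRef {N : ℕ} (α αv : Fin N → ℚ) (c : ℚ) (x : Fin N → ℚ) : Fin N → ℚ :=
  fun t => x t - ((∑ s, x s * αv s) - c) * α t

/-- The affine reflections generating `W_ℓ` in type `C_N`: the roots are
`ε_i ± ε_j` (`i < j`, coroot equal to the root, `ℓ_α = ℓ`) and the long roots `2ε_i`
(coroot `ε_i`, `ℓ_α = ℓ / gcd(ℓ,2)`). -/
def IsCRef (N ℓ : ℕ) (f : (Fin N → ℚ) → (Fin N → ℚ)) : Prop :=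
  (∃ i j : Fin N, ∃ k : ℤ, i < j ∧
    (f = affRef (eps i - eps j) (eps i - eps j) ((k : ℚ) * ℓ) ∨
     f = affRef (eps i + eps j) (eps i + eps j) ((k : ℚ) * ℓ))) ∨
  (∃ i : Fin N, ∃ k : ℤ,
    f = affRef ((2 : ℚ) • eps i) (eps i) ((k : ℚ) * ((ℓ : ℚ) / (Nat.gcd ℓ 2))))

/-- Two (ρ-shifted) weights are linked in type `C_N` if they lie in the same orbit of
the group generated by the affine reflections of `W_ℓ`. -/
def CLinked (N ℓ : ℕ) (x y : Fin N → ℚ) : Prop :=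
  Relation.EqvGen (fun u v => ∃ f, IsCRef N ℓ f ∧ v = f u) x y

/-- Dominant weights of type `C_N`: weakly decreasing non-negative integer tuples. -/
def DominantC (N : ℕ) (lam : Fin N → ℤ) : Prop :=
  (∀ s t : Fin N, s ≤ t → lam t ≤ lam s) ∧ ∀ t, 0 ≤ lam t

/-- `λ − ε_i`. -/
def subE {N : ℕ} (lam : Fin N → ℤ) (i : Fin N) : Fin N → ℤ :=
  fun t => lam t - if t = i then 1 else 0

/-- `λ + ε_i`. -/
def addE {N : ℕ} (lam : Fin N → ℤ) (i : Fin N) : Fin N → ℤ :=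
  fun t => lam t + if t = i then 1 else 0

/-- The ρ-shift in type `C_N`: `(λ+ρ)_j = λ_j + (N+1−j)` (0-indexed: `λ_j + (N−j)`). -/
def shiftC (N : ℕ) (lam : Fin N → ℤ) : Fin N → ℚ :=
  fun t => (lam t : ℚ) + ((N : ℚ) - ((t : ℕ) : ℚ))

def signModSetoid (ℓ : ℚ) : Setoid ℚ where
  r x y := ∃ k : ℤ, y = x + k * ℓ ∨ y = -x + k * ℓ
  iseqv := by
    refine ⟨fun x => ⟨0, Or.inl (by simp)⟩, ?_, ?_⟩
    · rintro x y ⟨k, rfl | rfl⟩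
      · exact ⟨-k, Or.inl (by push_cast; ring)⟩
      · exact ⟨k, Or.inr (by ring)⟩
    · rintro x y z ⟨k, rfl | rfl⟩ ⟨m, rfl | rfl⟩
      · exact ⟨k + m, Or.inl (by push_cast; ring)⟩
      · exact ⟨m - k, Or.inr (by push_cast; ring)⟩
      · exact ⟨k + m, Or.inr (by push_cast; ring)⟩
      · exact ⟨m - k, Or.inl (by push_cast; ring)⟩

namespace signModSetoid

variable (ℓ x : ℚ) (k : ℤ)

lemma mk_add_intCast_mul :
    Quotient.mk (signModSetoid ℓ) (x + k * ℓ) = Quotient.mk (signModSetoid ℓ) x :=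
  Quotient.sound ⟨-k, Or.inl (by push_cast; ring)⟩

lemma mk_neg_add_intCast_mul :
    Quotient.mk (signModSetoid ℓ) (-x + k * ℓ) = Quotient.mk (signModSetoid ℓ) x :=
  Quotient.sound ⟨k, Or.inr (by ring)⟩

lemma mk_sub_intCast_mul :
    Quotient.mk (signModSetoid ℓ) (x - k * ℓ) = Quotient.mk (signModSetoid ℓ) x := by
  simpa [sub_eq_add_neg] using mk_add_intCast_mul ℓ x (-k)

lemma dvd_of_mk_sub_one_eq_mk_add_one {ℓ : ℕ} (hodd : Odd ℓ) {a : ℤ}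
    (h : Quotient.mk (signModSetoid ℓ) (a - 1) = Quotient.mk (signModSetoid ℓ) (a + 1)) :
    (ℓ : ℤ) ∣ a := by
  have hcop : IsCoprime (ℓ : ℤ) 2 :=
    Nat.isCoprime_iff_coprime.mpr (Nat.coprime_two_right.mpr hodd)
  refine hcop.dvd_of_dvd_mul_left ?_
  obtain ⟨k, hk | hk⟩ := Quotient.exact h
  · have h2 : (2 : ℤ) = k * ℓ := by exact_mod_cast (by linarith : (2 : ℚ) = k * ℓ)
    exact ⟨a * k, by rw [h2]; ring⟩
  · have h2a : 2 * a = k * ℓ := by exact_mod_cast (by linarith : (2 * a : ℚ) = k * ℓ)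
    exact ⟨k, by rw [h2a, mul_comm]⟩

end signModSetoid

section MultisetOfValues

variable {ι α : Type*} [Fintype ι] {f g : ι → α}

lemma map_univ_val_eq_of_apply_eq_comp (σ : Equiv.Perm ι) (h : ∀ t, f t = g (σ t)) :
    Finset.univ.val.map f = Finset.univ.val.map g := by
  rw [show f = g ∘ σ from funext h, ← Multiset.map_map, Multiset.map_univ_val_equiv]

lemma apply_eq_of_map_univ_val_eq [DecidableEq ι] {i : ι} (hoff : ∀ t ≠ i, f t = g t)
    (h : Finset.univ.val.map f = Finset.univ.val.map g) : f i = g i := by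
  have hsplit (φ : ι → α) : Finset.univ.val.map φ = φ i ::ₘ (Finset.univ.erase i).val.map φ := by
    rw [← Multiset.map_cons, Finset.erase_val, Multiset.cons_erase (Finset.mem_univ_val i)]
  rwa [hsplit f, hsplit g, Multiset.map_congr rfl fun t ht => hoff t (Finset.ne_of_mem_erase ht),
    Multiset.cons_inj_left] at h

end MultisetOfValues

section Reflections

variable {N : ℕ} (x : Fin N → ℚ) (c : ℚ) {i j t : Fin N}

lemma affRef_apply_of_eq_zero {α αv : Fin N → ℚ} (h : α t = 0) : affRef α αv c x t = x t := by
  simp [affRef, h]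

lemma affRef_sub_apply_left (hij : i ≠ j) :
    affRef (eps i - eps j) (eps i - eps j) c x i = x j + c := by
  simp [affRef, mul_sub, Finset.sum_sub_distrib, eps, hij]; ring

lemma affRef_sub_apply_right (hij : i ≠ j) :
    affRef (eps i - eps j) (eps i - eps j) c x j = x i - c := by
  simp [affRef, mul_sub, Finset.sum_sub_distrib, eps, hij.symm]; ring

lemma affRef_add_apply_left (hij : i ≠ j) :
    affRef (eps i + eps j) (eps i + eps j) c x i = -x j + c := by
  simp [affRef, mul_add, Finset.sum_add_distrib, eps, hij]; ring

lemma affRef_add_apply_right (hij : i ≠ j) :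
    affRef (eps i + eps j) (eps i + eps j) c x j = -x i + c := by
  simp [affRef, mul_add, Finset.sum_add_distrib, eps, hij.symm]; ring

lemma affRef_two_smul_eps_apply_self :
    affRef ((2 : ℚ) • eps i) (eps i) c x i = -x i + 2 * c := by
  simp [affRef, eps]; ring

end Reflections

def residueMultiset {N : ℕ} (ℓ : ℚ) (x : Fin N → ℚ) : Multiset (Quotient (signModSetoid ℓ)) :=
  Finset.univ.val.map fun t => Quotient.mk _ (x t)

open signModSetoid in
lemma residueMultiset_eq_of_isCRef {N ℓ : ℕ} (hodd : Odd ℓ) {f : (Fin N → ℚ) → (Fin N → ℚ)}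
    (hf : IsCRef N ℓ f) (x : Fin N → ℚ) : residueMultiset ℓ (f x) = residueMultiset ℓ x := by
  have hgcd : ((Nat.gcd ℓ 2 : ℕ) : ℚ) = 1 := by simp [Nat.coprime_two_right.mpr hodd]
  obtain ⟨i, j, k, hij, rfl | rfl⟩ | ⟨i, k, rfl⟩ := hf
  · refine map_univ_val_eq_of_apply_eq_comp (Equiv.swap i j) fun t => ?_
    rcases eq_or_ne t i with rfl | hti
    · simp [affRef_sub_apply_left _ _ hij.ne, mk_add_intCast_mul]
    rcases eq_or_ne t j with rfl | htj
    · simp [affRef_sub_apply_right _ _ hij.ne, mk_sub_intCast_mul]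
    rw [Equiv.swap_apply_of_ne_of_ne hti htj, affRef_apply_of_eq_zero _ _ (by simp [eps, hti, htj])]
  · refine map_univ_val_eq_of_apply_eq_comp (Equiv.swap i j) fun t => ?_
    rcases eq_or_ne t i with rfl | hti
    · simp [affRef_add_apply_left _ _ hij.ne, mk_neg_add_intCast_mul]
    rcases eq_or_ne t j with rfl | htj
    · simp [affRef_add_apply_right _ _ hij.ne, mk_neg_add_intCast_mul]
    rw [Equiv.swap_apply_of_ne_of_ne hti htj, affRef_apply_of_eq_zero _ _ (by simp [eps, hti, htj])]
  · refine map_univ_val_eq_of_apply_eq_comp (Equiv.refl _) fun t => ?_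
    rcases eq_or_ne t i with rfl | hti
    · rw [affRef_two_smul_eps_apply_self, hgcd, div_one, ← mul_assoc]
      exact_mod_cast mk_neg_add_intCast_mul ℓ (x t) (2 * k)
    rw [affRef_apply_of_eq_zero _ _ (by simp [eps, hti]), Equiv.refl_apply]

lemma CLinked.residueMultiset_eq {N ℓ : ℕ} (hodd : Odd ℓ) {x y : Fin N → ℚ}
    (h : CLinked N ℓ x y) : residueMultiset ℓ x = residueMultiset ℓ y :=
  Setoid.eqvGen_le (s := Setoid.ker (residueMultiset ℓ))
    (fun _ _ ⟨_, hf, hv⟩ => hv ▸ (residueMultiset_eq_of_isCRef hodd hf _).symm) h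

lemma isCRef_two_smul_eps {N ℓ : ℕ} (hodd : Odd ℓ) (i : Fin N) (k : ℤ) :
    IsCRef N ℓ (affRef ((2 : ℚ) • eps i) (eps i) (k * ℓ)) :=
  Or.inr ⟨i, k, by simp [Nat.coprime_two_right.mpr hodd]⟩

section ShiftC

variable {N : ℕ} (lam : Fin N → ℤ) {i t : Fin N}

lemma shiftC_subE_self :
    shiftC N (subE lam i) i = ((lam i + ((N : ℤ) - (i : ℕ)) : ℤ) : ℚ) - 1 := by
  simp [shiftC, subE]; ring

lemma shiftC_addE_self :
    shiftC N (addE lam i) i = ((lam i + ((N : ℤ) - (i : ℕ)) : ℤ) : ℚ) + 1 := by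
  simp [shiftC, addE]; ring

lemma shiftC_subE_of_ne (h : t ≠ i) : shiftC N (subE lam i) t = shiftC N (addE lam i) t := by
  simp [shiftC, subE, addE, h]

end ShiftC

theorem linked_e_f_same_typeC_odd_general (N ℓ : ℕ) (hodd : Odd ℓ)
    (lam : Fin N → ℤ) (i : Fin N) :
    CLinked N ℓ (shiftC N (subE lam i)) (shiftC N (addE lam i)) ↔
      (ℓ : ℤ) ∣ (lam i + ((N : ℤ) - (i : ℕ))) := by
  constructor
  · intro h
    apply signModSetoid.dvd_of_mk_sub_one_eq_mk_add_one hodd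
    rw [← shiftC_subE_self, ← shiftC_addE_self]
    exact apply_eq_of_map_univ_val_eq (fun t ht => by rw [shiftC_subE_of_ne lam ht])
      (h.residueMultiset_eq hodd)
  · rintro ⟨k, hk⟩
    refine Relation.EqvGen.rel _ _ ⟨_, isCRef_two_smul_eps hodd i k, funext fun t => ?_⟩
    rcases eq_or_ne t i with rfl | ht
    · rw [affRef_two_smul_eps_apply_self, shiftC_subE_self, shiftC_addE_self, hk]
      push_cast; ring
    · rw [affRef_apply_of_eq_zero _ _ (by simp [eps, ht]), shiftC_subE_of_ne lam ht]

/-- Type `C` linkage at the origin, `ℓ` odd: if `ℓ > 3` is odd and `λ`, `μ = λ − ε_i`,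
`ν = λ + ε_i` are dominant, then `μ` and `ν` are linked under `W_ℓ` if and only if
`(λ+ρ)_i ≡ 0 (mod ℓ)`. -/
theorem linked_e_f_same_typeC_odd (N ℓ : ℕ) (hodd : Odd ℓ) (hl : 3 < ℓ)
    (lam : Fin N → ℤ) (hlam : DominantC N lam) (i : Fin N)
    (hmu : DominantC N (subE lam i)) (hnu : DominantC N (addE lam i)) :
    CLinked N ℓ (shiftC N (subE lam i)) (shiftC N (addE lam i)) ↔
      (ℓ : ℤ) ∣ (lam i + ((N : ℤ) - (i : ℕ))) :=
  linked_e_f_same_typeC_odd_general N ℓ hodd lam i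
end

section
/- Type B linkage for two e-operators, ℓ odd: let ℓ > 3 be odd and λ a dominant weight of type B_N with λ − ε_i and λ − ε_j both dominant, i ≠ j. Then λ − ε_i and λ − ε_j are linked under W_ℓ if and only if (λ+ρ)_i ≡ (λ+ρ)_j (mod ℓ). -/
/-- The affine reflections generating `W_ℓ` in type `B_N`: the long roots are
`ε_i ± ε_j` (`i < j`, coroot equal to the root, `d = 2`, so `ℓ_α = ℓ / gcd(ℓ,2)`)
and the short roots are `ε_i` (coroot `2ε_i`, `d = 1`, so `ℓ_α = ℓ`). -/
def IsBRef (N ℓ : ℕ) (f : (Fin N → ℚ) → (Fin N → ℚ)) : Prop :=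
  (∃ i j : Fin N, ∃ k : ℤ, i < j ∧
    (f = affRef (eps i - eps j) (eps i - eps j) ((k : ℚ) * ((ℓ : ℚ) / (Nat.gcd ℓ 2))) ∨
     f = affRef (eps i + eps j) (eps i + eps j) ((k : ℚ) * ((ℓ : ℚ) / (Nat.gcd ℓ 2))))) ∨
  (∃ i : Fin N, ∃ k : ℤ, f = affRef (eps i) ((2 : ℚ) • eps i) ((k : ℚ) * ℓ))

/-- Two (ρ-shifted) weights are linked in type `B_N` if they lie in the same orbit of
the group generated by the affine reflections of `W_ℓ`. -/
def BLinked (N ℓ : ℕ) (x y : Fin N → ℚ) : Prop :=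
  Relation.EqvGen (fun u v => ∃ f, IsBRef N ℓ f ∧ v = f u) x y

/-- Dominant weights of type `B_N`: weakly decreasing non-negative tuples. -/
def DominantB (N : ℕ) (lam : Fin N → ℚ) : Prop :=
  (∀ s t : Fin N, s ≤ t → lam t ≤ lam s) ∧ ∀ t, 0 ≤ lam t

/-- `λ − ε_i`. -/
def subEQ {N : ℕ} (lam : Fin N → ℚ) (i : Fin N) : Fin N → ℚ :=
  fun t => lam t - if t = i then 1 else 0

/-- The ρ-shift in type `B_N`: `ρ = (N−1/2, N−3/2, …, 1/2)`, so (0-indexed)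
`(λ+ρ)_t = λ_t + (N − t − 1/2)`. -/
def shiftB (N : ℕ) (lam : Fin N → ℚ) : Fin N → ℚ :=
  fun t => lam t + ((N : ℚ) - ((t : ℕ) : ℚ) - 1/2)


lemma sum_mul_eps {N : ℕ} (x : Fin N → ℚ) (i : Fin N) : ∑ s, x s * eps i s = x i := by
  simp [eps, mul_ite, Finset.sum_ite_eq']

lemma sum_mul_eps_sub {N : ℕ} (x : Fin N → ℚ) (i j : Fin N) :
    ∑ s, x s * (eps i - eps j) s = x i - x j := by
  simp only [Pi.sub_apply, mul_sub, Finset.sum_sub_distrib, sum_mul_eps]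

lemma sum_mul_eps_add {N : ℕ} (x : Fin N → ℚ) (i j : Fin N) :
    ∑ s, x s * (eps i + eps j) s = x i + x j := by
  simp only [Pi.add_apply, mul_add, Finset.sum_add_distrib, sum_mul_eps]

lemma sum_mul_eps_smul {N : ℕ} (x : Fin N → ℚ) (i : Fin N) :
    ∑ s, x s * ((2:ℚ) • eps i) s = 2 * x i := by
  simp only [Pi.smul_apply, smul_eq_mul]
  rw [Finset.sum_congr rfl (fun s _ => by ring : ∀ s ∈ Finset.univ, x s * (2 * eps i s) = 2 * (x s * eps i s)),
    ← Finset.mul_sum, sum_mul_eps]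

def qsetoid (ℓ : ℕ) : Setoid ℚ where
  r u v := ∃ z : ℤ, u = v + z * ℓ ∨ u = -v + z * ℓ
  iseqv := by
    constructor
    · intro u; exact ⟨0, Or.inl (by push_cast; ring)⟩
    · rintro u v ⟨z, h | h⟩
      · exact ⟨-z, Or.inl (by push_cast; linarith)⟩
      · exact ⟨z, Or.inr (by push_cast; linarith)⟩
    · rintro u v w ⟨z, h | h⟩ ⟨z', h' | h'⟩
      · exact ⟨z + z', Or.inl (by push_cast; linarith)⟩
      · exact ⟨z + z', Or.inr (by push_cast; linarith)⟩
      · exact ⟨z - z', Or.inr (by push_cast; linarith)⟩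
      · exact ⟨z - z', Or.inl (by push_cast; linarith)⟩

def qinv (N ℓ : ℕ) (x : Fin N → ℚ) : Multiset (Quotient (qsetoid ℓ)) :=
  Finset.univ.val.map (fun t => Quotient.mk (qsetoid ℓ) (x t))

lemma qinv_perm {N ℓ : ℕ} (x : Fin N → ℚ) (e : Equiv.Perm (Fin N)) :
    (Finset.univ.val.map fun t => Quotient.mk (qsetoid ℓ) (x (e t))) = qinv N ℓ x := by
  unfold qinv
  have h1 : (Finset.univ.val.map fun t => Quotient.mk (qsetoid ℓ) (x (e t)))
      = (Finset.univ.val.map ⇑e).map fun t => Quotient.mk (qsetoid ℓ) (x t) := by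
    rw [Multiset.map_map]; rfl
  have h2 : Multiset.map (⇑e) Finset.univ.val = Finset.univ.val := by
    have h3 := congrArg Finset.val (Finset.map_univ_equiv e)
    simpa using h3
  rw [h1, h2]

lemma qmk_eq {ℓ : ℕ} {u v : ℚ} (z : ℤ) (h : u = v + z * ℓ ∨ u = -v + z * ℓ) :
    Quotient.mk (qsetoid ℓ) u = Quotient.mk (qsetoid ℓ) v := Quotient.sound ⟨z, h⟩

lemma qmk_eq_iff {ℓ : ℕ} {u v : ℚ} :
    Quotient.mk (qsetoid ℓ) u = Quotient.mk (qsetoid ℓ) v ↔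
      ∃ z : ℤ, u = v + z * ℓ ∨ u = -v + z * ℓ := Quotient.eq

lemma qinv_ref {N ℓ : ℕ} (hodd : Odd ℓ) {f : (Fin N → ℚ) → (Fin N → ℚ)}
    (hf : IsBRef N ℓ f) (x : Fin N → ℚ) : qinv N ℓ (f x) = qinv N ℓ x := by
  have hg : ((Nat.gcd ℓ 2 : ℕ) : ℚ) = 1 := by
    rw [Nat.coprime_two_right.mpr hodd]; norm_num
  rcases hf with ⟨i, j, k, hlt, hf | hf⟩ | ⟨i, k, hf⟩ <;> subst hf
  · have hij : i ≠ j := ne_of_lt hlt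
    have hpt : ∀ t, Quotient.mk (qsetoid ℓ)
        (affRef (eps i - eps j) (eps i - eps j) ((k : ℚ) * ((ℓ : ℚ) / (Nat.gcd ℓ 2))) x t)
        = Quotient.mk (qsetoid ℓ) (x (Equiv.swap i j t)) := by
      intro t
      unfold affRef
      rw [sum_mul_eps_sub, hg, div_one]
      rcases eq_or_ne t i with rfl | hti
      · rw [Equiv.swap_apply_left]
        refine qmk_eq k (Or.inl ?_)
        have h1 : (eps t - eps j) t = 1 := by simp [eps, hij]
        rw [h1]; ring
      · rcases eq_or_ne t j with rfl | htj
        · rw [Equiv.swap_apply_right]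
          refine qmk_eq (-k) (Or.inl ?_)
          have h1 : (eps i - eps t) t = -1 := by simp [eps, hij.symm]
          rw [h1]; push_cast; ring
        · rw [Equiv.swap_apply_of_ne_of_ne hti htj]
          have h1 : (eps i - eps j) t = 0 := by simp [eps, hti, htj]
          rw [h1, mul_zero, sub_zero]
    unfold qinv
    rw [Multiset.map_congr rfl (fun t _ => hpt t)]
    exact qinv_perm x (Equiv.swap i j)
  · have hij : i ≠ j := ne_of_lt hlt
    have hpt : ∀ t, Quotient.mk (qsetoid ℓ)
        (affRef (eps i + eps j) (eps i + eps j) ((k : ℚ) * ((ℓ : ℚ) / (Nat.gcd ℓ 2))) x t)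
        = Quotient.mk (qsetoid ℓ) (x (Equiv.swap i j t)) := by
      intro t
      unfold affRef
      rw [sum_mul_eps_add, hg, div_one]
      rcases eq_or_ne t i with rfl | hti
      · rw [Equiv.swap_apply_left]
        refine qmk_eq k (Or.inr ?_)
        have h1 : (eps t + eps j) t = 1 := by simp [eps, hij]
        rw [h1]; ring
      · rcases eq_or_ne t j with rfl | htj
        · rw [Equiv.swap_apply_right]
          refine qmk_eq k (Or.inr ?_)
          have h1 : (eps i + eps t) t = 1 := by simp [eps, hij.symm]
          rw [h1]; ring
        · rw [Equiv.swap_apply_of_ne_of_ne hti htj]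
          have h1 : (eps i + eps j) t = 0 := by simp [eps, hti, htj]
          rw [h1, mul_zero, sub_zero]
    unfold qinv
    rw [Multiset.map_congr rfl (fun t _ => hpt t)]
    exact qinv_perm x (Equiv.swap i j)
  · have hpt : ∀ t, Quotient.mk (qsetoid ℓ)
        (affRef (eps i) ((2:ℚ) • eps i) ((k : ℚ) * ℓ) x t)
        = Quotient.mk (qsetoid ℓ) (x t) := by
      intro t
      unfold affRef
      rw [sum_mul_eps_smul]
      rcases eq_or_ne t i with rfl | hti
      · refine qmk_eq k (Or.inr ?_)
        have h1 : eps t t = 1 := by simp [eps]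
        rw [h1]; ring
      · have h1 : eps i t = 0 := by simp [eps, hti]
        rw [h1, mul_zero, sub_zero]
    unfold qinv
    exact Multiset.map_congr rfl (fun t _ => hpt t)

lemma qinv_linked {N ℓ : ℕ} (hodd : Odd ℓ) {x y : Fin N → ℚ} (h : BLinked N ℓ x y) :
    qinv N ℓ x = qinv N ℓ y := by
  induction h with
  | rel u v huv => obtain ⟨f, hf, rfl⟩ := huv; exact (qinv_ref hodd hf u).symm
  | refl u => rfl
  | symm u v _ ih => exact ih.symm
  | trans u v w _ _ ih1 ih2 => exact ih1.trans ih2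

lemma pair_eq {α : Type*} {a b c d : α} (h : ({a, b} : Multiset α) = {c, d}) :
    (a = c ∧ b = d) ∨ (a = d ∧ b = c) := by
  rcases Multiset.cons_eq_cons.mp h with ⟨h1, h2⟩ | ⟨_, cs, h1, h2⟩
  · left; exact ⟨h1, by simpa using h2⟩
  · obtain ⟨hbc, hcs⟩ := (Multiset.singleton_eq_cons_iff _).mp h1
    subst hcs
    obtain ⟨hda, -⟩ := (Multiset.singleton_eq_cons_iff _).mp h2
    exact Or.inr ⟨hda.symm, hbc⟩

lemma zl_ne {ℓ : ℕ} (hl : 3 < ℓ) {z : ℤ} {c : ℚ} (h : (z : ℚ) * ℓ = c) (hc0 : c ≠ 0)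
    (hc : |c| ≤ 2) : False := by
  have hz : z ≠ 0 := by rintro rfl; simp at h; exact hc0 h.symm
  have h1 : (1:ℚ) ≤ |(z:ℚ)| := by exact_mod_cast Int.one_le_abs hz
  have hl4 : (4:ℚ) ≤ (ℓ:ℚ) := by exact_mod_cast hl
  have h2 : (4:ℚ) ≤ |c| := by
    rw [← h, abs_mul, abs_of_nonneg (show (0:ℚ) ≤ (ℓ:ℚ) by positivity)]
    nlinarith
  linarith

/-- Type `B` linkage for two `e`-operators, `ℓ` odd: for a dominant type `B_N` weight `λ`
(all entries in `ℤ` or all in `ℤ + 1/2`) with `λ − ε_i` and `λ − ε_j` dominant, `i ≠ j`,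
the weights `λ − ε_i` and `λ − ε_j` are linked under `W_ℓ` if and only if
`(λ+ρ)_i ≡ (λ+ρ)_j (mod ℓ)`. -/
theorem linked_e_e_typeB_odd (N ℓ : ℕ) (hodd : Odd ℓ) (hl : 3 < ℓ)
    (lam : Fin N → ℚ)
    (hint : (∀ t, ∃ z : ℤ, lam t = z) ∨ (∀ t, ∃ z : ℤ, lam t = (z : ℚ) + 1/2))
    (hlam : DominantB N lam) (i j : Fin N) (hij : i ≠ j)
    (hmu : DominantB N (subEQ lam i)) (hnu : DominantB N (subEQ lam j)) :
    BLinked N ℓ (shiftB N (subEQ lam i)) (shiftB N (subEQ lam j)) ↔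
      ∃ z : ℤ, (lam i + ((N : ℚ) - ((i : ℕ) : ℚ) - 1/2))
        - (lam j + ((N : ℚ) - ((j : ℕ) : ℚ) - 1/2)) = (z : ℚ) * ℓ := by
  have hg : ((Nat.gcd ℓ 2 : ℕ) : ℚ) = 1 := by
    rw [Nat.coprime_two_right.mpr hodd]; norm_num
  have hji : j ≠ i := hij.symm
  set x := shiftB N (subEQ lam i) with hxdef
  set y := shiftB N (subEQ lam j) with hydef
  set a := lam i + ((N : ℚ) - ((i : ℕ) : ℚ) - 1/2) with hadef
  set b := lam j + ((N : ℚ) - ((j : ℕ) : ℚ) - 1/2) with hbdef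
  have hxi : x i = a - 1 := by
    rw [hxdef, hadef]; simp only [shiftB, subEQ, eq_self_iff_true, if_true]; ring
  have hxj : x j = b := by
    rw [hxdef, hbdef]; simp only [shiftB, subEQ, if_neg hji]; ring
  have hyi : y i = a := by
    rw [hydef, hadef]; simp only [shiftB, subEQ, if_neg hij]; ring
  have hyj : y j = b - 1 := by
    rw [hydef, hbdef]; simp only [shiftB, subEQ, eq_self_iff_true, if_true]; ring
  constructor
  · intro h
    have hq := qinv_linked hodd h
    have hmem : j ∈ ((Finset.univ.val : Multiset (Fin N)).erase i) :=
      (Multiset.mem_erase_of_ne hji).mpr (Finset.mem_val.mpr (Finset.mem_univ j))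
    set M := (((Finset.univ.val : Multiset (Fin N)).erase i).erase j) with hMdef
    have hdecomp : (Finset.univ.val : Multiset (Fin N)) = i ::ₘ j ::ₘ M := by
      rw [hMdef, Multiset.cons_erase hmem,
        Multiset.cons_erase (Finset.mem_val.mpr (Finset.mem_univ i))]
    have hnode : ((Finset.univ.val : Multiset (Fin N)).erase i).Nodup :=
      (Finset.univ.nodup).erase i
    have hMx : M.map (fun t => Quotient.mk (qsetoid ℓ) (x t))
        = M.map (fun t => Quotient.mk (qsetoid ℓ) (y t)) := by
      refine Multiset.map_congr rfl fun t ht => ?_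
      have htj : t ≠ j := ((hnode.mem_erase_iff).mp ht).1
      have hti : t ≠ i :=
        (((Finset.univ.nodup).mem_erase_iff).mp (Multiset.mem_of_mem_erase ht)).1
      congr 1
      rw [hxdef, hydef]
      simp only [shiftB, subEQ, if_neg hti, if_neg htj]
    have hq2 : ({Quotient.mk (qsetoid ℓ) (x i), Quotient.mk (qsetoid ℓ) (x j)} : Multiset _)
        = {Quotient.mk (qsetoid ℓ) (y i), Quotient.mk (qsetoid ℓ) (y j)} := by
      have h1 := hq
      unfold qinv at h1
      rw [hdecomp, Multiset.map_cons, Multiset.map_cons, Multiset.map_cons,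
        Multiset.map_cons, hMx] at h1
      have h2 : ({Quotient.mk (qsetoid ℓ) (x i), Quotient.mk (qsetoid ℓ) (x j)} : Multiset _)
            + M.map (fun t => Quotient.mk (qsetoid ℓ) (y t))
          = ({Quotient.mk (qsetoid ℓ) (y i), Quotient.mk (qsetoid ℓ) (y j)} : Multiset _)
            + M.map (fun t => Quotient.mk (qsetoid ℓ) (y t)) := by
        simpa [Multiset.insert_eq_cons, Multiset.cons_add, Multiset.singleton_add] using h1
      exact add_right_cancel h2
    rw [hxi, hxj, hyi, hyj] at hq2
    rcases pair_eq hq2 with ⟨h1, h2⟩ | ⟨h1, h2⟩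
    · -- ⟦a-1⟧ = ⟦a⟧ and ⟦b⟧ = ⟦b-1⟧
      obtain ⟨z, hz | hz⟩ := qmk_eq_iff.mp h1
      · exact (zl_ne hl (show (z:ℚ) * ℓ = -1 by linarith) (by norm_num) (by norm_num)).elim
      obtain ⟨z', hz' | hz'⟩ := qmk_eq_iff.mp h2
      · exact (zl_ne hl (show (z':ℚ) * ℓ = 1 by linarith) (by norm_num) (by norm_num)).elim
      -- 2a = 1 + zℓ, 2b = 1 + z'ℓ
      obtain ⟨w, hw⟩ : ∃ w : ℤ, a - b = (w : ℚ) := by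
        have hji' : ∃ w0 : ℤ, lam i - lam j = (w0 : ℚ) := by
          rcases hint with hI | hI
          · obtain ⟨zi, hzi⟩ := hI i; obtain ⟨zj, hzj⟩ := hI j
            exact ⟨zi - zj, by rw [hzi, hzj]; push_cast; ring⟩
          · obtain ⟨zi, hzi⟩ := hI i; obtain ⟨zj, hzj⟩ := hI j
            exact ⟨zi - zj, by rw [hzi, hzj]; push_cast; ring⟩
        obtain ⟨w0, hw0⟩ := hji'
        refine ⟨w0 + (j : ℕ) - (i : ℕ), ?_⟩
        rw [hadef, hbdef]
        push_cast
        linarith [hw0]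
      have h2ab : 2 * (a - b) = ((z - z' : ℤ) : ℚ) * ℓ := by push_cast; linarith
      have hzz : (2 : ℤ) ∣ (z - z') := by
        have hdvd : (2:ℤ) ∣ (z - z') * (ℓ:ℤ) := by
          refine ⟨w, ?_⟩
          have : ((z - z' : ℤ) : ℚ) * ((ℓ:ℕ) : ℚ) = ((2 * w : ℤ) : ℚ) := by
            push_cast; push_cast at h2ab; linarith [hw]
          exact_mod_cast this
        rcases (Int.Prime.dvd_mul' Nat.prime_two (by exact_mod_cast hdvd)) with hd | hd
        · exact_mod_cast hd
        · exfalso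
          have heven : Even ℓ := (even_iff_two_dvd).mpr (by exact_mod_cast hd)
          exact (Nat.not_even_iff_odd.mpr hodd) heven
      obtain ⟨m, hm⟩ := hzz
      refine ⟨m, ?_⟩
      have : ((z - z' : ℤ) : ℚ) = 2 * m := by exact_mod_cast congrArg (Int.cast : ℤ → ℚ) hm
      rw [this] at h2ab
      linarith
    · -- ⟦a-1⟧ = ⟦b-1⟧ and ⟦b⟧ = ⟦a⟧
      obtain ⟨z, hz | hz⟩ := qmk_eq_iff.mp h1
      · exact ⟨z, by linarith⟩
      obtain ⟨z', hz' | hz'⟩ := qmk_eq_iff.mp h2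
      · exact ⟨-z', by push_cast; linarith⟩
      · exact (zl_ne hl (show ((z' - z : ℤ) : ℚ) * ℓ = 2 by push_cast; linarith)
          (by norm_num) (by norm_num)).elim
  · rintro ⟨z, hz⟩
    rcases lt_or_gt_of_ne hij with hlt | hlt
    · refine Relation.EqvGen.rel _ _
        ⟨_, Or.inl ⟨i, j, z, hlt, Or.inl rfl⟩, ?_⟩
      funext t
      simp only [affRef]
      rw [sum_mul_eps_sub x i j, hg, div_one]
      rcases eq_or_ne t i with h | hti
      · rw [show t = i from h]
        have he : (eps i - eps j) i = 1 := by simp [eps, hij]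
        rw [he, hyi, hxi, hxj]
        linear_combination hz
      · rcases eq_or_ne t j with h | htj
        · rw [show t = j from h]
          have he : (eps i - eps j) j = -1 := by simp [eps, hji]
          rw [he, hyj, hxi, hxj]
          linear_combination -hz
        · have he : (eps i - eps j) t = 0 := by simp [eps, hti, htj]
          rw [he, mul_zero, sub_zero]
          rw [hxdef, hydef]
          simp only [shiftB, subEQ, if_neg hti, if_neg htj]
    · refine Relation.EqvGen.rel _ _
        ⟨_, Or.inl ⟨j, i, -z, hlt, Or.inl rfl⟩, ?_⟩
      funext t
      simp only [affRef]
      rw [sum_mul_eps_sub x j i, hg, div_one]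
      rcases eq_or_ne t i with h | hti
      · rw [show t = i from h]
        have he : (eps j - eps i) i = -1 := by simp [eps, hij]
        rw [he, hyi, hxi, hxj]
        push_cast
        linear_combination hz
      · rcases eq_or_ne t j with h | htj
        · rw [show t = j from h]
          have he : (eps j - eps i) j = 1 := by simp [eps, hji]
          rw [he, hyj, hxi, hxj]
          push_cast
          linear_combination -hz
        · have he : (eps j - eps i) t = 0 := by simp [eps, hti, htj]
          rw [he, mul_zero, sub_zero]
          rw [hxdef, hydef]
          simp only [shiftB, subEQ, if_neg hti, if_neg htj]
end
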